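/- (Swapping Lemma) Let G' be a finite multigraph with vertex set V and edge multiset E, and let π be a linear arrangement of G'. Let X and Y be nonempty disjoint subsets of V that are consecutive in π, with X immediately preceding Y; let L be the set of vertices placed by π to the left of X and R the set of vertices placed to the right of Y (so V = L ∪ X ∪ Y ∪ R). Suppose P_X, P_C, P_Y and p are real numbers such that: every vertex of X is incident (with multiplicity) to at most P_X edges whose other endpoint lies in L; every vertex of X is incident to at most P_C edges whose other endpoint lies in Y, and every vertex of Y is incident to at most P_C edges whose other endpoint lies in X; every vertex of Y is incident to at most P_Y edges whose other endpoint lies in R; and the total number of edges (with multiplicity) with one endpoint in X and the other in R is at least p·|X|. If p > P_X + 2·P_C + P_Y, then the linear arrangement obtained from π by swapping the blocks X and Y — i.e., placing the vertices of Y on the first |Y| positions of the interval π(X ∪ Y) and the vertices of X on the remaining |X| positions, preserving the relative order inside X and inside Y and leaving all other vertices fixed — has strictly smaller cost than π. -/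
import Mathlib


open Finset

/-- Number of edges (with multiplicity) of the multigraph with edge family `E` that are
incident to `v` and whose other endpoint lies in `S`. -/
def degTo {V : Type*} [DecidableEq V] {ι : Type*} [Fintype ι]
    (E : ι → V × V) (v : V) (S : Finset V) : ℕ :=
  (Finset.univ.filter fun i =>
    ((E i).1 = v ∧ (E i).2 ∈ S) ∨ ((E i).2 = v ∧ (E i).1 ∈ S)).card

/-- Number of edges (with multiplicity) with one endpoint in `S` and the other in `T`. -/
def edgesBetween {V : Type*} [DecidableEq V] {ι : Type*} [Fintype ι]
    (E : ι → V × V) (S T : Finset V) : ℕ :=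
  (Finset.univ.filter fun i =>
    ((E i).1 ∈ S ∧ (E i).2 ∈ T) ∨ ((E i).1 ∈ T ∧ (E i).2 ∈ S)).card

/-- Cost of a placement `f : V → ℤ` of the vertices of the multigraph with edge family `E`
on the integer line: the sum over the edges of the distance between the two endpoints. -/
def mcost {V : Type*} {ι : Type*} [Fintype ι] (E : ι → V × V) (f : V → ℤ) : ℤ :=
  ∑ i, |f (E i).1 - f (E i).2|

/-- **Swapping Lemma.**  If `X` and `Y` are consecutive blocks of the arrangement `π`
(`X` immediately preceding `Y`), `L` is everything to the left of `X` and `R` everything to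
the right of `Y`, the degree bounds `P_X, P_C, P_Y` hold, the average degree from `X`
towards `R` is at least `p`, and `p > P_X + 2 P_C + P_Y`, then swapping the blocks `X` and
`Y` (moving every vertex of `X` right by `|Y|` and every vertex of `Y` left by `|X|`)
strictly decreases the cost of the arrangement. -/
lemma between_le_sum_deg {V : Type*} [DecidableEq V] {ι : Type*} [Fintype ι]
    (E : ι → V × V) (S T : Finset V) :
    edgesBetween E S T ≤ ∑ v ∈ S, degTo E v T := by
  unfold edgesBetween degTo
  simp only [Finset.card_filter]
  rw [Finset.sum_comm]
  apply Finset.sum_le_sum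
  intro i _
  by_cases h : ((E i).1 ∈ S ∧ (E i).2 ∈ T) ∨ ((E i).1 ∈ T ∧ (E i).2 ∈ S)
  · rw [if_pos h]
    rcases h with ⟨h1, h2⟩ | ⟨h1, h2⟩
    · calc (1:ℕ) = if ((E i).1 = (E i).1 ∧ (E i).2 ∈ T) ∨ ((E i).2 = (E i).1 ∧ (E i).1 ∈ T)
            then 1 else 0 := by simp [h2]
        _ ≤ _ := Finset.single_le_sum (f := fun v => if ((E i).1 = v ∧ (E i).2 ∈ T) ∨ ((E i).2 = v ∧ (E i).1 ∈ T) then 1 else 0) (fun v _ => Nat.zero_le _) h1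
    · calc (1:ℕ) = if ((E i).1 = (E i).2 ∧ (E i).2 ∈ T) ∨ ((E i).2 = (E i).2 ∧ (E i).1 ∈ T)
            then 1 else 0 := by simp [h1]
        _ ≤ _ := Finset.single_le_sum (f := fun v => if ((E i).1 = v ∧ (E i).2 ∈ T) ∨ ((E i).2 = v ∧ (E i).1 ∈ T) then 1 else 0) (fun v _ => Nat.zero_le _) h2
  · rw [if_neg h]; exact Nat.zero_le _

lemma edgesBetween_comm {V : Type*} [DecidableEq V] {ι : Type*} [Fintype ι]
    (E : ι → V × V) (S T : Finset V) :
    edgesBetween E S T = edgesBetween E T S := by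
  unfold edgesBetween
  congr 1
  ext i
  simp only [Finset.mem_filter]
  tauto

set_option maxHeartbeats 1000000 in
lemma key' (a nX nY pu pw : ℕ) (gu gw : ℤ)
    (hu : (a ≤ pu ∧ pu < a + nX ∧ gu = (pu:ℤ) + nY) ∨
          (a + nX ≤ pu ∧ pu < a + nX + nY ∧ gu = (pu:ℤ) - nX) ∨
          ((pu < a ∨ a + nX + nY ≤ pu) ∧ gu = (pu:ℤ)))
    (hw : (a ≤ pw ∧ pw < a + nX ∧ gw = (pw:ℤ) + nY) ∨
          (a + nX ≤ pw ∧ pw < a + nX + nY ∧ gw = (pw:ℤ) - nX) ∨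
          ((pw < a ∨ a + nX + nY ≤ pw) ∧ gw = (pw:ℤ))) :
    |gu - gw| - |(pu:ℤ) - (pw:ℤ)| ≤
      (nY:ℤ) * (if ((a ≤ pu ∧ pu < a + nX) ∧ pw < a) ∨ (pu < a ∧ (a ≤ pw ∧ pw < a + nX)) then 1 else 0)
      + ((nX:ℤ) + (nY:ℤ)) * (if ((a ≤ pu ∧ pu < a + nX) ∧ (a + nX ≤ pw ∧ pw < a + nX + nY)) ∨ ((a + nX ≤ pu ∧ pu < a + nX + nY) ∧ (a ≤ pw ∧ pw < a + nX)) then 1 else 0)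
      + (nX:ℤ) * (if ((a + nX ≤ pu ∧ pu < a + nX + nY) ∧ a + nX + nY ≤ pw) ∨ (a + nX + nY ≤ pu ∧ (a + nX ≤ pw ∧ pw < a + nX + nY)) then 1 else 0)
      - (nY:ℤ) * (if ((a ≤ pu ∧ pu < a + nX) ∧ a + nX + nY ≤ pw) ∨ (a + nX + nY ≤ pu ∧ (a ≤ pw ∧ pw < a + nX)) then 1 else 0) := by
  rcases abs_cases (gu - gw) with ⟨e1, e1'⟩ | ⟨e1, e1'⟩ <;>
    rcases abs_cases ((pu:ℤ) - (pw:ℤ)) with ⟨e2, e2'⟩ | ⟨e2, e2'⟩ <;>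
    rw [e1, e2] <;> split_ifs <;> omega

theorem swapping_lemma
    {V : Type*} [Fintype V] [DecidableEq V] {ι : Type*} [Fintype ι]
    (E : ι → V × V) (π : V ≃ Fin (Fintype.card V))
    (X Y : Finset V) (hXne : X.Nonempty) (hYne : Y.Nonempty) (hXY : Disjoint X Y)
    (a : ℕ)
    (hXcons : ∀ v, v ∈ X ↔ a ≤ (π v : ℕ) ∧ (π v : ℕ) < a + X.card)
    (hYcons : ∀ v, v ∈ Y ↔ a + X.card ≤ (π v : ℕ) ∧ (π v : ℕ) < a + X.card + Y.card)
    (P_X P_C P_Y p : ℝ)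
    (hPX : ∀ v ∈ X,
      (degTo E v (Finset.univ.filter fun u => (π u : ℕ) < a) : ℝ) ≤ P_X)
    (hPC₁ : ∀ v ∈ X, (degTo E v Y : ℝ) ≤ P_C)
    (hPC₂ : ∀ v ∈ Y, (degTo E v X : ℝ) ≤ P_C)
    (hPY : ∀ v ∈ Y,
      (degTo E v (Finset.univ.filter fun u => a + X.card + Y.card ≤ (π u : ℕ)) : ℝ) ≤ P_Y)
    (hp : p * X.card ≤
      (edgesBetween E X (Finset.univ.filter fun u => a + X.card + Y.card ≤ (π u : ℕ)) : ℝ))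
    (hineq : P_X + 2 * P_C + P_Y < p) :
    mcost E (fun v => if v ∈ X then ((π v : ℕ) : ℤ) + Y.card
                      else if v ∈ Y then ((π v : ℕ) : ℤ) - X.card
                      else ((π v : ℕ) : ℤ))
      < mcost E (fun v => ((π v : ℕ) : ℤ)) := by
  classical
  set nX := X.card with hnX
  set nY := Y.card with hnY
  set L : Finset V := Finset.univ.filter (fun u => (π u : ℕ) < a) with hL
  set R : Finset V := Finset.univ.filter (fun u => a + nX + nY ≤ (π u : ℕ)) with hR
  have hmemL : ∀ v, v ∈ L ↔ (π v : ℕ) < a := by intro v; rw [hL]; simp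
  have hmemR : ∀ v, v ∈ R ↔ a + nX + nY ≤ (π v : ℕ) := by intro v; rw [hR]; simp
  -- classification of vertices
  have class' : ∀ v : V,
      (a ≤ (π v : ℕ) ∧ (π v : ℕ) < a + nX ∧
        (if v ∈ X then ((π v : ℕ) : ℤ) + nY else if v ∈ Y then ((π v : ℕ) : ℤ) - nX
          else ((π v : ℕ) : ℤ)) = ((π v : ℕ) : ℤ) + nY) ∨
      (a + nX ≤ (π v : ℕ) ∧ (π v : ℕ) < a + nX + nY ∧
        (if v ∈ X then ((π v : ℕ) : ℤ) + nY else if v ∈ Y then ((π v : ℕ) : ℤ) - nX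
          else ((π v : ℕ) : ℤ)) = ((π v : ℕ) : ℤ) - nX) ∨
      (((π v : ℕ) < a ∨ a + nX + nY ≤ (π v : ℕ)) ∧
        (if v ∈ X then ((π v : ℕ) : ℤ) + nY else if v ∈ Y then ((π v : ℕ) : ℤ) - nX
          else ((π v : ℕ) : ℤ)) = ((π v : ℕ) : ℤ)) := by
    intro v
    by_cases hx : v ∈ X
    · left
      have := (hXcons v).1 hx
      exact ⟨this.1, this.2, by rw [if_pos hx]⟩
    · by_cases hy : v ∈ Y
      · right; left
        have := (hYcons v).1 hy
        exact ⟨this.1, this.2, by rw [if_neg hx, if_pos hy]⟩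
      · right; right
        have h1 := (hXcons v).not.1 hx
        have h2 := (hYcons v).not.1 hy
        push_neg at h1 h2
        exact ⟨by omega, by rw [if_neg hx, if_neg hy]⟩
  -- counting identities
  have c1 : ∑ i : ι, (if ((a ≤ (π (E i).1 : ℕ) ∧ (π (E i).1 : ℕ) < a + nX) ∧ (π (E i).2 : ℕ) < a) ∨
        ((π (E i).1 : ℕ) < a ∧ (a ≤ (π (E i).2 : ℕ) ∧ (π (E i).2 : ℕ) < a + nX)) then (1:ℤ) else 0)
      = (edgesBetween E X L : ℤ) := by
    rw [edgesBetween, Finset.card_filter, Nat.cast_sum]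
    refine Finset.sum_congr rfl fun i _ => ?_
    rw [Nat.cast_ite, Nat.cast_one, Nat.cast_zero]
    exact if_congr (by simp only [hXcons, hmemL]) rfl rfl
  have c2 : ∑ i : ι, (if ((a ≤ (π (E i).1 : ℕ) ∧ (π (E i).1 : ℕ) < a + nX) ∧ (a + nX ≤ (π (E i).2 : ℕ) ∧ (π (E i).2 : ℕ) < a + nX + nY)) ∨
        ((a + nX ≤ (π (E i).1 : ℕ) ∧ (π (E i).1 : ℕ) < a + nX + nY) ∧ (a ≤ (π (E i).2 : ℕ) ∧ (π (E i).2 : ℕ) < a + nX)) then (1:ℤ) else 0)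
      = (edgesBetween E X Y : ℤ) := by
    rw [edgesBetween, Finset.card_filter, Nat.cast_sum]
    refine Finset.sum_congr rfl fun i _ => ?_
    rw [Nat.cast_ite, Nat.cast_one, Nat.cast_zero]
    exact if_congr (by simp only [hXcons, hYcons]) rfl rfl
  have c3 : ∑ i : ι, (if ((a + nX ≤ (π (E i).1 : ℕ) ∧ (π (E i).1 : ℕ) < a + nX + nY) ∧ a + nX + nY ≤ (π (E i).2 : ℕ)) ∨
        (a + nX + nY ≤ (π (E i).1 : ℕ) ∧ (a + nX ≤ (π (E i).2 : ℕ) ∧ (π (E i).2 : ℕ) < a + nX + nY)) then (1:ℤ) else 0)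
      = (edgesBetween E Y R : ℤ) := by
    rw [edgesBetween, Finset.card_filter, Nat.cast_sum]
    refine Finset.sum_congr rfl fun i _ => ?_
    rw [Nat.cast_ite, Nat.cast_one, Nat.cast_zero]
    exact if_congr (by simp only [hYcons, hmemR]) rfl rfl
  have c4 : ∑ i : ι, (if ((a ≤ (π (E i).1 : ℕ) ∧ (π (E i).1 : ℕ) < a + nX) ∧ a + nX + nY ≤ (π (E i).2 : ℕ)) ∨
        (a + nX + nY ≤ (π (E i).1 : ℕ) ∧ (a ≤ (π (E i).2 : ℕ) ∧ (π (E i).2 : ℕ) < a + nX)) then (1:ℤ) else 0)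
      = (edgesBetween E X R : ℤ) := by
    rw [edgesBetween, Finset.card_filter, Nat.cast_sum]
    refine Finset.sum_congr rfl fun i _ => ?_
    rw [Nat.cast_ite, Nat.cast_one, Nat.cast_zero]
    exact if_congr (by simp only [hXcons, hmemR]) rfl rfl
  -- real bounds on the edge counts
  have hx : (0:ℝ) < nX := by exact_mod_cast Finset.card_pos.mpr hXne
  have hy : (0:ℝ) < nY := by exact_mod_cast Finset.card_pos.mpr hYne
  have e1 : (edgesBetween E X L : ℝ) ≤ P_X * nX := by
    have h2 : (edgesBetween E X L : ℝ) ≤ ∑ v ∈ X, (degTo E v L : ℝ) := by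
      exact_mod_cast between_le_sum_deg E X L
    calc (edgesBetween E X L : ℝ) ≤ ∑ v ∈ X, (degTo E v L : ℝ) := h2
      _ ≤ ∑ _v ∈ X, P_X := Finset.sum_le_sum hPX
      _ = nX * P_X := by rw [Finset.sum_const, nsmul_eq_mul]
      _ = P_X * nX := mul_comm _ _
  have e2 : (edgesBetween E X Y : ℝ) ≤ P_C * nX := by
    have h2 : (edgesBetween E X Y : ℝ) ≤ ∑ v ∈ X, (degTo E v Y : ℝ) := by
      exact_mod_cast between_le_sum_deg E X Y
    calc (edgesBetween E X Y : ℝ) ≤ ∑ v ∈ X, (degTo E v Y : ℝ) := h2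
      _ ≤ ∑ _v ∈ X, P_C := Finset.sum_le_sum hPC₁
      _ = nX * P_C := by rw [Finset.sum_const, nsmul_eq_mul]
      _ = P_C * nX := mul_comm _ _
  have e3 : (edgesBetween E X Y : ℝ) ≤ P_C * nY := by
    rw [edgesBetween_comm]
    have h2 : (edgesBetween E Y X : ℝ) ≤ ∑ v ∈ Y, (degTo E v X : ℝ) := by
      exact_mod_cast between_le_sum_deg E Y X
    calc (edgesBetween E Y X : ℝ) ≤ ∑ v ∈ Y, (degTo E v X : ℝ) := h2
      _ ≤ ∑ _v ∈ Y, P_C := Finset.sum_le_sum hPC₂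
      _ = nY * P_C := by rw [Finset.sum_const, nsmul_eq_mul]
      _ = P_C * nY := mul_comm _ _
  have e4 : (edgesBetween E Y R : ℝ) ≤ P_Y * nY := by
    have h2 : (edgesBetween E Y R : ℝ) ≤ ∑ v ∈ Y, (degTo E v R : ℝ) := by
      exact_mod_cast between_le_sum_deg E Y R
    calc (edgesBetween E Y R : ℝ) ≤ ∑ v ∈ Y, (degTo E v R : ℝ) := h2
      _ ≤ ∑ _v ∈ Y, P_Y := Finset.sum_le_sum hPY
      _ = nY * P_Y := by rw [Finset.sum_const, nsmul_eq_mul]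
      _ = P_Y * nY := mul_comm _ _
  have hfinal : (nY:ℤ) * (edgesBetween E X L) + ((nX:ℤ) + (nY:ℤ)) * (edgesBetween E X Y)
      + (nX:ℤ) * (edgesBetween E Y R) - (nY:ℤ) * (edgesBetween E X R) < 0 := by
    have hr : ((nY:ℝ)) * (edgesBetween E X L) + ((nX:ℝ) + (nY:ℝ)) * (edgesBetween E X Y)
        + (nX:ℝ) * (edgesBetween E Y R) - (nY:ℝ) * (edgesBetween E X R) < 0 := by
      nlinarith [mul_le_mul_of_nonneg_left e1 hy.le, mul_le_mul_of_nonneg_left e2 hy.le,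
        mul_le_mul_of_nonneg_left e3 hx.le, mul_le_mul_of_nonneg_left e4 hx.le,
        mul_le_mul_of_nonneg_left hp hy.le, mul_pos (mul_pos hx hy) (sub_pos.mpr hineq)]
    exact_mod_cast hr
  rw [← sub_neg]
  simp only [mcost]
  rw [← Finset.sum_sub_distrib]
  have hle := Finset.sum_le_sum (s := (Finset.univ : Finset ι))
    (fun i _ => key' a nX nY ((π (E i).1 : ℕ)) ((π (E i).2 : ℕ)) _ _ (class' (E i).1) (class' (E i).2))
  refine lt_of_le_of_lt hle ?_
  rw [Finset.sum_sub_distrib, Finset.sum_add_distrib, Finset.sum_add_distrib,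
    ← Finset.mul_sum, ← Finset.mul_sum, ← Finset.mul_sum, ← Finset.mul_sum, c1, c2, c3, c4]
  exact hfinal
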